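/- arXiv:2311.03819 — 4 statements merged into one kernel-verified Lean document; each statement's English description precedes it below -/
import Mathlib

section
/- Let f : ℝⁿ → ℝⁿ be differentiable, with symmetric Jacobian at every point (i.e., Df(x) is a self-adjoint linear map for every x) and satisfying Df(x)[x] = f(x) for every x. Define ρ_RED(x) := (1/2) ⟨x, x − f(x)⟩. Then ρ_RED is differentiable and its gradient is ∇ρ_RED(x) = x − f(x) for every x. -/
open scoped RealInnerProductSpace

/-- If `f` is differentiable with symmetric Jacobian everywhere and
`Df(x)[x] = f x` for all `x`, then `ρ_RED(x) := (1/2)⟨x, x - f x⟩` is differentiable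
with gradient `∇ρ_RED(x) = x - f x`. -/
theorem gradient_of_red_regularizer {n : ℕ}
    (f : EuclideanSpace ℝ (Fin n) → EuclideanSpace ℝ (Fin n))
    (hdiff : Differentiable ℝ f)
    (hsymm : ∀ x u v : EuclideanSpace ℝ (Fin n),
      ⟪fderiv ℝ f x u, v⟫ = ⟪u, fderiv ℝ f x v⟫)
    (hhom : ∀ x : EuclideanSpace ℝ (Fin n), fderiv ℝ f x x = f x) :
    ∀ x : EuclideanSpace ℝ (Fin n),
      HasGradientAt (fun y => (1/2 : ℝ) * ⟪y, y - f y⟫) (x - f x) x := by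
  intro x
  have hf : HasFDerivAt f (fderiv ℝ f x) x := (hdiff x).hasFDerivAt
  have hg : HasFDerivAt (fun y => y - f y)
      (ContinuousLinearMap.id ℝ _ - fderiv ℝ f x) x := (hasFDerivAt_id x).sub hf
  have hinner := ((hasFDerivAt_id x).inner ℝ hg).const_mul (1/2 : ℝ)
  rw [hasGradientAt_iff_hasFDerivAt]
  convert hinner using 1
  · rfl
  · rfl
  apply ContinuousLinearMap.ext
  intro u
  simp only [ContinuousLinearMap.smul_apply, ContinuousLinearMap.comp_apply,
    ContinuousLinearMap.prod_apply, fderivInnerCLM_apply, InnerProductSpace.toDual_apply_apply,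
    ContinuousLinearMap.sub_apply, ContinuousLinearMap.id_apply, id_eq, smul_eq_mul]
  rw [inner_sub_left, inner_sub_right, inner_sub_right, ← hsymm x x u, hhom x,
    real_inner_comm (f x) u, real_inner_comm u x]
  ring
end

section
/- Let f : ℝⁿ → ℝⁿ be nonexpansive (1-Lipschitz), and let ρ : ℝⁿ → ℝ be differentiable with ∇ρ(x) = x − f(x) for every x. Then ρ is a convex function. -/
open scoped RealInnerProductSpace

/-! Since `f` is 1-Lipschitz, Cauchy–Schwarz makes `x ↦ x - f x` a monotone operator:
`⟪(x - f x) - (y - f y), x - y⟫ ≥ ‖x - y‖² - ‖f x - f y‖ ‖x - y‖ ≥ 0`. A function whose gradient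
is a monotone operator is convex, because its restriction to every line has a monotone
derivative. -/

open AffineMap Set

theorem convexOn_univ_of_convexOn_comp_lineMap {𝕜 E : Type*} [Field 𝕜] [LinearOrder 𝕜]
    [IsStrictOrderedRing 𝕜] [AddCommGroup E] [Module 𝕜 E] {ρ : E → 𝕜}
    (h : ∀ x y : E, ConvexOn 𝕜 univ (ρ ∘ lineMap (k := 𝕜) x y)) : ConvexOn 𝕜 univ ρ := by
  refine ⟨convex_univ, fun x _ y _ a b ha hb hab ↦ ?_⟩
  have hline := (h x y).2 (mem_univ 0) (mem_univ 1) ha hb hab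
  have ha' : a = 1 - b := by linarith
  simpa [lineMap_apply_module, ha'] using hline

section

variable {F : Type*} [NormedAddCommGroup F] [InnerProductSpace ℝ F]

def IsMonotoneOperator (T : F → F) : Prop :=
  ∀ x y, 0 ≤ ⟪T x - T y, x - y⟫

theorem LipschitzWith.isMonotoneOperator_id_sub {f : F → F} (hf : LipschitzWith 1 f) :
    IsMonotoneOperator fun x ↦ x - f x := by
  intro x y
  have hfxy : ‖f x - f y‖ ≤ ‖x - y‖ := by
    simpa [dist_eq_norm] using hf.dist_le_mul x y
  calc (0 : ℝ) ≤ ‖x - y‖ * (‖x - y‖ - ‖f x - f y‖) :=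
        mul_nonneg (norm_nonneg _) (sub_nonneg.2 hfxy)
    _ = ‖x - y‖ ^ 2 - ‖f x - f y‖ * ‖x - y‖ := by ring
    _ ≤ ‖x - y‖ ^ 2 - ⟪f x - f y, x - y⟫ := by
        gcongr
        exact real_inner_le_norm _ _
    _ = ⟪(x - f x) - (y - f y), x - y⟫ := by
        rw [sub_sub_sub_comm, inner_sub_left (x - y), real_inner_self_eq_norm_sq]

theorem lineMap_sub_lineMap_eq_smul (x y : F) (s t : ℝ) :
    lineMap x y t - lineMap x y s = (t - s) • (y - x) := by
  simp only [lineMap_apply_module']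
  module

theorem IsMonotoneOperator.monotone_inner_lineMap {T : F → F} (hT : IsMonotoneOperator T)
    (x y : F) : Monotone fun t : ℝ ↦ ⟪T (lineMap x y t), y - x⟫ := by
  intro s t hst
  rcases hst.eq_or_lt with rfl | hlt
  · exact le_rfl
  have h := hT (lineMap x y t) (lineMap x y s)
  rw [lineMap_sub_lineMap_eq_smul, real_inner_smul_right, inner_sub_left] at h
  exact sub_nonneg.1 (nonneg_of_mul_nonneg_right h (sub_pos.2 hlt))

theorem HasGradientAt.hasDerivAt_comp_lineMap [CompleteSpace F] {ρ : F → ℝ} {g x y : F}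
    {t : ℝ} (h : HasGradientAt ρ g (lineMap x y t)) :
    HasDerivAt (ρ ∘ lineMap x y) ⟪g, y - x⟫ t := by
  have := h.hasFDerivAt.comp_hasDerivAt t hasDerivAt_lineMap
  rwa [InnerProductSpace.toDual_apply_apply] at this

theorem convexOn_univ_of_hasGradientAt_of_isMonotoneOperator [CompleteSpace F] {ρ : F → ℝ}
    {T : F → F} (hρ : ∀ x, HasGradientAt ρ (T x) x) (hT : IsMonotoneOperator T) :
    ConvexOn ℝ univ ρ := by
  refine convexOn_univ_of_convexOn_comp_lineMap fun x y ↦ ?_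
  have hderiv (t : ℝ) : HasDerivAt (ρ ∘ lineMap x y) ⟪T (lineMap x y t), y - x⟫ t :=
    (hρ _).hasDerivAt_comp_lineMap
  refine Monotone.convexOn_univ_of_deriv (fun t ↦ (hderiv t).differentiableAt) ?_
  rw [funext fun t ↦ (hderiv t).deriv]
  exact hT.monotone_inner_lineMap x y

end

/-- If `f` is nonexpansive and `ρ` is differentiable with
`∇ρ(x) = x - f x` for all `x`, then `ρ` is convex. -/
theorem convex_of_gradient_id_sub_nonexpansive {n : ℕ}
    (f : EuclideanSpace ℝ (Fin n) → EuclideanSpace ℝ (Fin n))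
    (hf : LipschitzWith 1 f)
    (ρ : EuclideanSpace ℝ (Fin n) → ℝ)
    (hρ : ∀ x : EuclideanSpace ℝ (Fin n), HasGradientAt ρ (x - f x) x) :
    ConvexOn ℝ Set.univ ρ :=
  convexOn_univ_of_hasGradientAt_of_isMonotoneOperator hρ hf.isMonotoneOperator_id_sub
end

section
/- Let f : ℝⁿ → ℝⁿ be continuous and κ-demicontractive for some κ ∈ [0, 1), i.e., ‖f(x) − z‖² ≤ ‖x − z‖² + κ ‖x − f(x)‖² for every x ∈ ℝⁿ and every fixed point z of f. Then the fixed-point set Fix(f) := { x ∈ ℝⁿ : f(x) = x } is closed and convex. -/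
/-- The fixed-point set of a continuous `κ`-demicontractive map
with `κ ∈ [0,1)` is closed and convex. -/
theorem fixed_point_set_closed_convex {n : ℕ}
    (f : EuclideanSpace ℝ (Fin n) → EuclideanSpace ℝ (Fin n))
    (hcont : Continuous f)
    (κ : ℝ) (hκ0 : 0 ≤ κ) (hκ1 : κ < 1)
    (hdemi : ∀ (x z : EuclideanSpace ℝ (Fin n)), f z = z →
      ‖f x - z‖ ^ 2 ≤ ‖x - z‖ ^ 2 + κ * ‖x - f x‖ ^ 2) :
    IsClosed {x : EuclideanSpace ℝ (Fin n) | f x = x} ∧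
      Convex ℝ {x : EuclideanSpace ℝ (Fin n) | f x = x} := by
  constructor
  · exact isClosed_eq hcont continuous_id
  · intro z₁ hz₁ z₂ hz₂ a b ha hb hab
    simp only [Set.mem_setOf_eq] at hz₁ hz₂ ⊢
    set x := a • z₁ + b • z₂ with hx
    have key : ∀ z, f z = z →
        (1 - κ) * ‖x - f x‖ ^ 2 ≤ 2 * (inner ℝ (x - z) (x - f x) : ℝ) := by
      intro z hz
      have h := hdemi x z hz
      have heq : f x - z = (x - z) - (x - f x) := by abel
      rw [heq, norm_sub_sq_real] at h
      linarith
    have h1 := key z₁ hz₁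
    have h2 := key z₂ hz₂
    have hzero : a • (x - z₁) + b • (x - z₂) = 0 := by
      rw [hx]
      rw [smul_sub, smul_sub]
      have : a • (a • z₁ + b • z₂) + b • (a • z₁ + b • z₂)
          = (a + b) • (a • z₁ + b • z₂) := by rw [add_smul]
      rw [sub_add_sub_comm, this, hab, one_smul]
      abel
    have hsum : a * (inner ℝ (x - z₁) (x - f x) : ℝ)
        + b * (inner ℝ (x - z₂) (x - f x) : ℝ) = 0 := by
      have := congrArg (fun v => (inner ℝ v (x - f x) : ℝ)) hzero
      simpa [inner_add_left, real_inner_smul_left, Finset.mul_sum, mul_assoc] using this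
    have hkey2 : (1 - κ) * ‖x - f x‖ ^ 2 ≤ 0 := by
      have hs := add_le_add (mul_le_mul_of_nonneg_left h1 ha)
        (mul_le_mul_of_nonneg_left h2 hb)
      calc (1 - κ) * ‖x - f x‖ ^ 2
          = (a + b) * ((1 - κ) * ‖x - f x‖ ^ 2) := by rw [hab]; ring
        _ = a * ((1 - κ) * ‖x - f x‖ ^ 2) + b * ((1 - κ) * ‖x - f x‖ ^ 2) := by ring
        _ ≤ a * (2 * inner ℝ (x - z₁) (x - f x)) + b * (2 * inner ℝ (x - z₂) (x - f x)) := hs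
        _ = 2 * (a * inner ℝ (x - z₁) (x - f x) + b * inner ℝ (x - z₂) (x - f x)) := by ring
        _ = 0 := by rw [hsum]; ring
    have hv : ‖x - f x‖ ^ 2 = 0 := by
      by_contra h
      have hvpos : 0 < ‖x - f x‖ ^ 2 := lt_of_le_of_ne (sq_nonneg _) (Ne.symm h)
      nlinarith [mul_pos (show (0:ℝ) < 1 - κ by linarith) hvpos]
    have hxe : x - f x = 0 := by
      rw [← norm_eq_zero]; nlinarith [norm_nonneg (x - f x)]
    exact (sub_eq_zero.mp hxe).symm
end

section
/- Let ρ : ℝⁿ → ℝ be convex and differentiable, A : ℝⁿ → ℝⁿ linear, b ∈ ℝⁿ, δ > 0, and let C := { x : ‖Ax − b‖² ≤ δ }. If no global minimizer of ρ over ℝⁿ belongs to C, then every minimizer x* of ρ over C satisfies ‖A x* − b‖² = δ (the discrepancy constraint is active at the solution). -/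
/-- If no global minimizer of the convex differentiable `ρ` is
feasible, then every solution of the constrained problem lies on the boundary
of the discrepancy constraint: `‖A x* - b‖² = δ`. -/
theorem constraint_active_at_solution {n : ℕ}
    (ρ : EuclideanSpace ℝ (Fin n) → ℝ)
    (hconv : ConvexOn ℝ Set.univ ρ) (hdiff : Differentiable ℝ ρ)
    (A : EuclideanSpace ℝ (Fin n) →ₗ[ℝ] EuclideanSpace ℝ (Fin n))
    (b : EuclideanSpace ℝ (Fin n)) (δ : ℝ) (hδ : 0 < δ)
    (hno : ¬ ∃ x : EuclideanSpace ℝ (Fin n),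
      (∀ y : EuclideanSpace ℝ (Fin n), ρ x ≤ ρ y) ∧ ‖A x - b‖ ^ 2 ≤ δ) :
    ∀ xstar : EuclideanSpace ℝ (Fin n),
      ‖A xstar - b‖ ^ 2 ≤ δ →
      (∀ y : EuclideanSpace ℝ (Fin n), ‖A y - b‖ ^ 2 ≤ δ → ρ xstar ≤ ρ y) →
      ‖A xstar - b‖ ^ 2 = δ := by
  intro xstar hfeas hmin
  by_contra hne
  have hlt : ‖A xstar - b‖ ^ 2 < δ := lt_of_le_of_ne hfeas hne
  have hcont : Continuous fun x : EuclideanSpace ℝ (Fin n) => ‖A x - b‖ ^ 2 := by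
    exact ((A.continuous_of_finiteDimensional.sub continuous_const).norm).pow 2
  have hnhds : {x : EuclideanSpace ℝ (Fin n) | ‖A x - b‖ ^ 2 ≤ δ} ∈ nhds xstar := by
    have : {x : EuclideanSpace ℝ (Fin n) | ‖A x - b‖ ^ 2 < δ} ∈ nhds xstar :=
      (isOpen_lt hcont continuous_const).mem_nhds hlt
    exact Filter.mem_of_superset this fun x hx => le_of_lt (Set.mem_setOf_eq ▸ hx)
  have hloc : IsLocalMin ρ xstar :=
    Filter.eventually_iff_exists_mem.mpr ⟨_, hnhds, fun y hy => hmin y hy⟩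
  exact hno ⟨xstar, IsMinOn.of_isLocalMin_of_convex_univ hloc hconv, hfeas⟩
end
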